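/- Consider the planar four-bar linkage with vertices A = (0,0), B = (a,0), D = (b,0), C = (a+b,0) (with a, b > 0, a ≠ b), edge lengths |AB| = a, |AD| = b, |BC| = b, |DC| = a. At this aligned configuration the 4×8 rigidity matrix (rows are gradients of the four squared-edge-length functions with respect to the 8 vertex coordinates) has rank 3. -/
import Mathlib


/-- Rigidity matrix of the aligned planar four-bar linkage with vertices
`A = (0,0)`, `B = (a,0)`, `C = (a+b,0)`, `D = (b,0)` and edges `AB, AD, BC, DC`.
Columns are ordered `(Aₓ, A_y, Bₓ, B_y, Cₓ, C_y, Dₓ, D_y)`; the row of edge `(u,v)`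
is the gradient of `p ↦ |p_u - p_v|²` at this configuration. -/
noncomputable def fourBarRigidityMatrix (a b : ℝ) : Matrix (Fin 4) (Fin 8) ℝ :=
  !![-2*a, 0, 2*a, 0, 0, 0, 0, 0;       -- edge AB
     -2*b, 0, 0, 0, 0, 0, 2*b, 0;       -- edge AD
     0, 0, -2*b, 0, 2*b, 0, 0, 0;       -- edge BC
     0, 0, 0, 0, 2*a, 0, -2*a, 0]       -- edge DC

/-- Left factor for the factorization witnessing `rank ≤ 3`. -/
noncomputable def fourBarB (a b : ℝ) : Matrix (Fin 4) (Fin 3) ℝ :=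
  !![2*a, 0, 0;
     0, 2*b, 0;
     0, 0, 2*b;
     2*a, -(2*a), 2*a]

/-- Right factor for the factorization witnessing `rank ≤ 3`. -/
noncomputable def fourBarC : Matrix (Fin 3) (Fin 8) ℝ :=
  !![-1, 0, 1, 0, 0, 0, 0, 0;
     -1, 0, 0, 0, 0, 0, 1, 0;
     0, 0, -1, 0, 1, 0, 0, 0]

/-- Row selection matrix picking rows 0,1,2. -/
noncomputable def fourBarP : Matrix (Fin 3) (Fin 4) ℝ :=
  !![1, 0, 0, 0;
     0, 1, 0, 0;
     0, 0, 1, 0]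

/-- Column selection matrix picking columns 0,2,4. -/
noncomputable def fourBarQ : Matrix (Fin 8) (Fin 3) ℝ :=
  !![1, 0, 0;
     0, 0, 0;
     0, 1, 0;
     0, 0, 0;
     0, 0, 1;
     0, 0, 0;
     0, 0, 0;
     0, 0, 0]

set_option maxHeartbeats 1600000 in
set_option maxRecDepth 8000 in
lemma fourBar_factor (a b : ℝ) :
    fourBarRigidityMatrix a b = fourBarB a b * fourBarC := by
  ext i j
  fin_cases i <;> fin_cases j <;>
    simp only [fourBarRigidityMatrix, fourBarB, fourBarC, Matrix.mul_apply,
      Fin.sum_univ_succ, Finset.sum_empty, Matrix.cons_val_zero, Matrix.cons_val_zero',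
      Matrix.cons_val_succ, Matrix.of_apply,
      show (⟨1, by omega⟩:Fin 2) = (⟨0, by omega⟩:Fin 1).succ from rfl,
      show (⟨1, by omega⟩:Fin 3) = (⟨0, by omega⟩:Fin 2).succ from rfl,
      show (⟨2, by omega⟩:Fin 3) = (⟨1, by omega⟩:Fin 2).succ from rfl,
      show (⟨1, by omega⟩:Fin 4) = (⟨0, by omega⟩:Fin 3).succ from rfl,
      show (⟨2, by omega⟩:Fin 4) = (⟨1, by omega⟩:Fin 3).succ from rfl,
      show (⟨3, by omega⟩:Fin 4) = (⟨2, by omega⟩:Fin 3).succ from rfl,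
      show (⟨1, by omega⟩:Fin 5) = (⟨0, by omega⟩:Fin 4).succ from rfl,
      show (⟨2, by omega⟩:Fin 5) = (⟨1, by omega⟩:Fin 4).succ from rfl,
      show (⟨3, by omega⟩:Fin 5) = (⟨2, by omega⟩:Fin 4).succ from rfl,
      show (⟨4, by omega⟩:Fin 5) = (⟨3, by omega⟩:Fin 4).succ from rfl,
      show (⟨1, by omega⟩:Fin 6) = (⟨0, by omega⟩:Fin 5).succ from rfl,
      show (⟨2, by omega⟩:Fin 6) = (⟨1, by omega⟩:Fin 5).succ from rfl,
      show (⟨3, by omega⟩:Fin 6) = (⟨2, by omega⟩:Fin 5).succ from rfl,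
      show (⟨4, by omega⟩:Fin 6) = (⟨3, by omega⟩:Fin 5).succ from rfl,
      show (⟨5, by omega⟩:Fin 6) = (⟨4, by omega⟩:Fin 5).succ from rfl,
      show (⟨1, by omega⟩:Fin 7) = (⟨0, by omega⟩:Fin 6).succ from rfl,
      show (⟨2, by omega⟩:Fin 7) = (⟨1, by omega⟩:Fin 6).succ from rfl,
      show (⟨3, by omega⟩:Fin 7) = (⟨2, by omega⟩:Fin 6).succ from rfl,
      show (⟨4, by omega⟩:Fin 7) = (⟨3, by omega⟩:Fin 6).succ from rfl,
      show (⟨5, by omega⟩:Fin 7) = (⟨4, by omega⟩:Fin 6).succ from rfl,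
      show (⟨6, by omega⟩:Fin 7) = (⟨5, by omega⟩:Fin 6).succ from rfl,
      show (⟨1, by omega⟩:Fin 8) = (⟨0, by omega⟩:Fin 7).succ from rfl,
      show (⟨2, by omega⟩:Fin 8) = (⟨1, by omega⟩:Fin 7).succ from rfl,
      show (⟨3, by omega⟩:Fin 8) = (⟨2, by omega⟩:Fin 7).succ from rfl,
      show (⟨4, by omega⟩:Fin 8) = (⟨3, by omega⟩:Fin 7).succ from rfl,
      show (⟨5, by omega⟩:Fin 8) = (⟨4, by omega⟩:Fin 7).succ from rfl,
      show (⟨6, by omega⟩:Fin 8) = (⟨5, by omega⟩:Fin 7).succ from rfl,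
      show (⟨7, by omega⟩:Fin 8) = (⟨6, by omega⟩:Fin 7).succ from rfl] <;> ring

set_option maxHeartbeats 1600000 in
set_option maxRecDepth 8000 in
lemma fourBar_minor (a b : ℝ) :
    fourBarP * fourBarRigidityMatrix a b * fourBarQ =
      !![-2*a, 2*a, 0; -2*b, 0, 0; 0, -(2*b), 2*b] := by
  ext i j
  fin_cases i <;> fin_cases j <;>
    simp only [fourBarRigidityMatrix, fourBarP, fourBarQ, Matrix.mul_apply,
      Fin.sum_univ_succ, Finset.sum_empty, Matrix.cons_val_zero, Matrix.cons_val_zero',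
      Matrix.cons_val_succ, Matrix.of_apply,
      show (⟨1, by omega⟩:Fin 2) = (⟨0, by omega⟩:Fin 1).succ from rfl,
      show (⟨1, by omega⟩:Fin 3) = (⟨0, by omega⟩:Fin 2).succ from rfl,
      show (⟨2, by omega⟩:Fin 3) = (⟨1, by omega⟩:Fin 2).succ from rfl,
      show (⟨1, by omega⟩:Fin 4) = (⟨0, by omega⟩:Fin 3).succ from rfl,
      show (⟨2, by omega⟩:Fin 4) = (⟨1, by omega⟩:Fin 3).succ from rfl,
      show (⟨3, by omega⟩:Fin 4) = (⟨2, by omega⟩:Fin 3).succ from rfl,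
      show (⟨1, by omega⟩:Fin 5) = (⟨0, by omega⟩:Fin 4).succ from rfl,
      show (⟨2, by omega⟩:Fin 5) = (⟨1, by omega⟩:Fin 4).succ from rfl,
      show (⟨3, by omega⟩:Fin 5) = (⟨2, by omega⟩:Fin 4).succ from rfl,
      show (⟨4, by omega⟩:Fin 5) = (⟨3, by omega⟩:Fin 4).succ from rfl,
      show (⟨1, by omega⟩:Fin 6) = (⟨0, by omega⟩:Fin 5).succ from rfl,
      show (⟨2, by omega⟩:Fin 6) = (⟨1, by omega⟩:Fin 5).succ from rfl,
      show (⟨3, by omega⟩:Fin 6) = (⟨2, by omega⟩:Fin 5).succ from rfl,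
      show (⟨4, by omega⟩:Fin 6) = (⟨3, by omega⟩:Fin 5).succ from rfl,
      show (⟨5, by omega⟩:Fin 6) = (⟨4, by omega⟩:Fin 5).succ from rfl,
      show (⟨1, by omega⟩:Fin 7) = (⟨0, by omega⟩:Fin 6).succ from rfl,
      show (⟨2, by omega⟩:Fin 7) = (⟨1, by omega⟩:Fin 6).succ from rfl,
      show (⟨3, by omega⟩:Fin 7) = (⟨2, by omega⟩:Fin 6).succ from rfl,
      show (⟨4, by omega⟩:Fin 7) = (⟨3, by omega⟩:Fin 6).succ from rfl,
      show (⟨5, by omega⟩:Fin 7) = (⟨4, by omega⟩:Fin 6).succ from rfl,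
      show (⟨6, by omega⟩:Fin 7) = (⟨5, by omega⟩:Fin 6).succ from rfl,
      show (⟨1, by omega⟩:Fin 8) = (⟨0, by omega⟩:Fin 7).succ from rfl,
      show (⟨2, by omega⟩:Fin 8) = (⟨1, by omega⟩:Fin 7).succ from rfl,
      show (⟨3, by omega⟩:Fin 8) = (⟨2, by omega⟩:Fin 7).succ from rfl,
      show (⟨4, by omega⟩:Fin 8) = (⟨3, by omega⟩:Fin 7).succ from rfl,
      show (⟨5, by omega⟩:Fin 8) = (⟨4, by omega⟩:Fin 7).succ from rfl,
      show (⟨6, by omega⟩:Fin 8) = (⟨5, by omega⟩:Fin 7).succ from rfl,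
      show (⟨7, by omega⟩:Fin 8) = (⟨6, by omega⟩:Fin 7).succ from rfl] <;> ring

/-- At the aligned configuration of the planar four-bar linkage the `4 × 8`
rigidity matrix has rank `3`. -/
theorem fourBar_rigidityMatrix_rank_eq_three (a b : ℝ) (ha : 0 < a) (hb : 0 < b)
    (hab : a ≠ b) : (fourBarRigidityMatrix a b).rank = 3 := by
  apply le_antisymm
  · calc (fourBarRigidityMatrix a b).rank
        = (fourBarB a b * fourBarC).rank := by rw [fourBar_factor]
      _ ≤ (fourBarB a b).rank := Matrix.rank_mul_le_left _ _
      _ ≤ Fintype.card (Fin 3) := Matrix.rank_le_card_width _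
      _ = 3 := by simp
  · have hdet : IsUnit (!![-2*a, 2*a, 0; -2*b, 0, 0; 0, -(2*b), 2*b] : Matrix (Fin 3) (Fin 3) ℝ).det := by
      have : (!![-2*a, 2*a, 0; -2*b, 0, 0; 0, -(2*b), 2*b] : Matrix (Fin 3) (Fin 3) ℝ).det
          = 8 * a * b * b := by
        simp [Matrix.det_fin_three]; ring
      rw [this]
      exact (by positivity : (0:ℝ) < 8 * a * b * b).ne'.isUnit
    have h3 : (!![-2*a, 2*a, 0; -2*b, 0, 0; 0, -(2*b), 2*b] : Matrix (Fin 3) (Fin 3) ℝ).rank = 3 := by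
      rw [Matrix.rank_of_isUnit _ ((Matrix.isUnit_iff_isUnit_det _).mpr hdet)]
      simp
    calc (3:ℕ) = (!![-2*a, 2*a, 0; -2*b, 0, 0; 0, -(2*b), 2*b] : Matrix (Fin 3) (Fin 3) ℝ).rank := h3.symm
      _ = (fourBarP * fourBarRigidityMatrix a b * fourBarQ).rank := by rw [fourBar_minor]
      _ ≤ (fourBarP * fourBarRigidityMatrix a b).rank := Matrix.rank_mul_le_left _ _
      _ ≤ (fourBarRigidityMatrix a b).rank := Matrix.rank_mul_le_right _ _
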